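/- Let (b_m)_{m≥1} satisfy β := ∑_{m=1}^∞ m|b_m| < ∞ and let L ≥ 3/2. On the set D_L = {g ∈ ℓ_∞ : g_0 = 1, ‖g‖_Δ ≤ L}, for all 0 ≤ λ ≤ 1/(6βL), the operator g ↦ g̃ defined by g̃_0 = g_0 and g̃_n = g̃_{n−1} − λ[∑_{m=2}^n g_m b_m (g_{n−1} − g_{n−m}) + g_{n−1} ∑_{j=n+1}^∞ g_j b_j] maps D_L into D_L and satisfies ‖g̃ − h̃‖_Δ ≤ (2/3)‖g − h‖_Δ for all g, h ∈ D_L. -/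

import Mathlib

/-!
Write the bracket in the recursion for `g̃_n` as `F(g, g)_n`, where `F(u, v)` is bilinear: a memory
part `∑_{2 ≤ m ≤ n} u_m b_m (v_{n-1} - v_{n-m})` and a tail part `v_{n-1} ∑_{j > n} u_j b_j`.
When summing over `n`, each `|v_{n-1} - v_{n-m}|` is at most a sum of `|Δv_k|` over a window of
length `m - 1`, and every `k` lies in at most `m` such windows; likewise `j` occurs in at most `j`
tails. Hence `∑_n |F(u, v)_n|` is at most `β ‖u‖_∞ ‖v‖_Δ` for the memory part and
`β ‖u‖_∞ ‖v‖_∞` for the tail part, where `‖·‖_∞ ≤ ‖·‖_Δ`. This gives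
`‖g̃‖_Δ ≤ 1 + 2λβL² ≤ 1 + L/3 ≤ L`, and by bilinearity `F(g, g) - F(h, h)` splits into four terms,
each contributing at most `βL‖g - h‖_Δ`, so `‖g̃ - h̃‖_Δ ≤ 4λβL ‖g - h‖_Δ ≤ (2/3) ‖g - h‖_Δ`.
-/

def deltaOp (g : ℕ → ℝ) : ℕ → ℝ
  | 0 => g 0
  | n + 1 => g (n + 1) - g n

open Finset

noncomputable def deltaNorm (g : ℕ → ℝ) : ℝ := ∑' n, |deltaOp g n|

lemma deltaOp_sub (g h : ℕ → ℝ) (n : ℕ) : deltaOp (g - h) n = deltaOp g n - deltaOp h n := by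
  cases n with
  | zero => rfl
  | succ n => simp only [deltaOp, Pi.sub_apply]; ring

lemma sum_range_deltaOp (g : ℕ → ℝ) (n : ℕ) : ∑ k ∈ range (n + 1), deltaOp g k = g n := by
  induction n with
  | zero => simp [deltaOp]
  | succ n ih => rw [sum_range_succ, ih, deltaOp]; ring

lemma sum_Ioc_deltaOp (g : ℕ → ℝ) {a c : ℕ} (hac : a ≤ c) :
    ∑ k ∈ Ioc a c, deltaOp g k = g c - g a := by
  induction c, hac using Nat.le_induction with
  | base => simp
  | succ c _ ih => rw [sum_Ioc_succ_top ‹_›, ih, deltaOp]; ring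

lemma abs_le_deltaNorm {g : ℕ → ℝ} (hg : Summable fun n => |deltaOp g n|) (n : ℕ) :
    |g n| ≤ deltaNorm g := by
  rw [← sum_range_deltaOp g n]
  exact (abs_sum_le_sum_abs _ _).trans (hg.sum_le_tsum _ fun k _ => abs_nonneg _)

lemma summable_abs_deltaOp_sub {g h : ℕ → ℝ} (hg : Summable fun n => |deltaOp g n|)
    (hh : Summable fun n => |deltaOp h n|) : Summable fun n => |deltaOp (g - h) n| :=
  (hg.add hh).of_nonneg_of_le (fun _ => abs_nonneg _) fun n => by
    rw [deltaOp_sub]; exact abs_sub _ _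

lemma summable_and_deltaNorm_le_of_recurrence {x F : ℕ → ℝ} {lam K : ℝ} (hlam0 : 0 ≤ lam)
    (hx : ∀ n, 1 ≤ n → x n = x (n - 1) - lam * F n)
    (hF : ∀ N, ∑ n ∈ range N, |F (n + 1)| ≤ K) :
    Summable (fun n => |deltaOp x n|) ∧ deltaNorm x ≤ |x 0| + lam * K := by
  have hK : 0 ≤ K := by simpa using hF 0
  have hN : ∀ N, ∑ n ∈ range N, |deltaOp x n| ≤ |x 0| + lam * K := by
    rintro (_ | N)
    · simpa using by positivity
    · have hstep : ∀ n, |deltaOp x (n + 1)| = lam * |F (n + 1)| := fun n => by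
        rw [deltaOp, hx (n + 1) n.succ_pos, Nat.add_sub_cancel, sub_sub_cancel_left, abs_neg,
          abs_mul, abs_of_nonneg hlam0]
      rw [sum_range_succ', add_comm]
      simp only [hstep, ← mul_sum]
      exact add_le_add le_rfl (mul_le_mul_of_nonneg_left (hF N) hlam0)
  exact ⟨summable_of_sum_range_le (fun _ => abs_nonneg _) hN,
    Real.tsum_le_of_sum_range_le (fun _ => abs_nonneg _) hN⟩

lemma summable_of_summable_nat_mul {c : ℕ → ℝ} (hc : ∀ j, 0 ≤ c j)
    (hcs : Summable fun j : ℕ => (j : ℝ) * c j) : Summable c := by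
  rw [← summable_nat_add_iff 1]
  refine ((summable_nat_add_iff 1).2 hcs).of_nonneg_of_le (fun _ => hc _) fun j => ?_
  exact le_mul_of_one_le_left (hc _) (by push_cast; linarith [j.cast_nonneg (α := ℝ)])

lemma summable_ite_le {f : ℕ → ℝ} (hf : Summable f) (n : ℕ) :
    Summable fun j => if n ≤ j then f j else 0 :=
  (hf.indicator {j | n ≤ j}).congr fun j => by simp [Set.indicator_apply]

lemma sum_range_sum_Ioc_le {a : ℕ → ℝ} (ha : ∀ k, 0 ≤ a k) (has : Summable a) (m N : ℕ) :
    ∑ n ∈ range N, ∑ k ∈ Ioc (n + 1 - m) n, a k ≤ m * ∑' k, a k := by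
  rw [sum_comm' (t' := range N) (s' := fun k => (range N).filter fun n => k ∈ Ioc (n + 1 - m) n)
    fun n k => by simp only [mem_filter, mem_range, mem_Ioc]; omega]
  calc ∑ k ∈ range N, ∑ n ∈ (range N).filter (fun n => k ∈ Ioc (n + 1 - m) n), a k
      ≤ ∑ k ∈ range N, m * a k := by
        gcongr with k
        rw [sum_const, nsmul_eq_mul]
        gcongr
        · exact ha k
        have hsub : (range N).filter (fun n => k ∈ Ioc (n + 1 - m) n) ⊆ Ico k (k + m) := by
          intro n; simp only [mem_filter, mem_range, mem_Ioc, mem_Ico]; omega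
        exact_mod_cast (card_le_card hsub).trans (by simp)
    _ = m * ∑ k ∈ range N, a k := (mul_sum _ _ _).symm
    _ ≤ m * ∑' k, a k := by gcongr; exact has.sum_le_tsum _ fun k _ => ha k

lemma sum_window_le {c a : ℕ → ℝ} (hc : ∀ m, 0 ≤ c m)
    (hcs : Summable fun m : ℕ => (m : ℝ) * c m) (ha : ∀ k, 0 ≤ a k) (has : Summable a) (N : ℕ) :
    ∑ n ∈ range N, ∑ m ∈ Icc 2 (n + 1), c m * ∑ k ∈ Ioc (n + 1 - m) n, a k
      ≤ (∑' m : ℕ, (m : ℝ) * c m) * ∑' k, a k := by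
  calc _ ≤ ∑ n ∈ range N, ∑ m ∈ range (N + 1), c m * ∑ k ∈ Ioc (n + 1 - m) n, a k := by
        refine sum_le_sum fun n hn => sum_le_sum_of_subset_of_nonneg (fun m hm => ?_)
          fun m _ _ => mul_nonneg (hc m) (sum_nonneg fun k _ => ha k)
        simp only [mem_range, mem_Icc] at hn hm ⊢
        omega
    _ = ∑ m ∈ range (N + 1), c m * ∑ n ∈ range N, ∑ k ∈ Ioc (n + 1 - m) n, a k := by
        rw [sum_comm]; simp only [mul_sum]
    _ ≤ ∑ m ∈ range (N + 1), c m * (m * ∑' k, a k) := by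
        gcongr with m
        exacts [hc m, sum_range_sum_Ioc_le ha has m N]
    _ = (∑ m ∈ range (N + 1), (m : ℝ) * c m) * ∑' k, a k := by
        rw [sum_mul]; exact sum_congr rfl fun m _ => by ring
    _ ≤ _ := by
        gcongr
        · exact tsum_nonneg ha
        · exact hcs.sum_le_tsum _ fun m _ => mul_nonneg m.cast_nonneg (hc m)

lemma sum_range_tsum_tail_le {c : ℕ → ℝ} (hc : ∀ j, 0 ≤ c j)
    (hcs : Summable fun j : ℕ => (j : ℝ) * c j) (N : ℕ) :
    ∑ n ∈ range N, ∑' j : ℕ, (if n + 1 + 1 ≤ j then c j else 0) ≤ ∑' j : ℕ, (j : ℝ) * c j := by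
  have hcs' := summable_of_summable_nat_mul hc hcs
  rw [← Summable.tsum_finsetSum fun n _ => summable_ite_le hcs' _]
  refine Summable.tsum_le_tsum (fun j => ?_) (summable_sum fun n _ => summable_ite_le hcs' _) hcs
  calc ∑ n ∈ range N, (if n + 1 + 1 ≤ j then c j else 0)
      = ∑ n ∈ (range N).filter (fun n => n + 1 + 1 ≤ j), c j := (sum_filter _ _).symm
    _ ≤ ∑ n ∈ range j, c j := by
        refine sum_le_sum_of_subset_of_nonneg (fun n hn => ?_) fun _ _ _ => hc j
        simp only [mem_filter, mem_range] at hn ⊢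
        omega
    _ = j * c j := by simp

/-- `g̃_n = g̃_{n-1} - λ (memoryTerm b g g n + tailTerm b g g n)`, the diagonal of the bilinear map
`(u, v) ↦ memoryTerm b u v n + tailTerm b u v n`. -/
noncomputable def memoryTerm (b u v : ℕ → ℝ) (n : ℕ) : ℝ :=
  ∑ m ∈ Icc 2 n, u m * b m * (v (n - 1) - v (n - m))

noncomputable def tailTerm (b u v : ℕ → ℝ) (n : ℕ) : ℝ :=
  v (n - 1) * ∑' j : ℕ, (if n + 1 ≤ j then u j * b j else 0)

lemma memoryTerm_sub (b g h : ℕ → ℝ) (n : ℕ) :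
    memoryTerm b g g n - memoryTerm b h h n
      = memoryTerm b (g - h) g n + memoryTerm b h (g - h) n := by
  simp only [memoryTerm, ← sum_sub_distrib, ← sum_add_distrib, Pi.sub_apply]
  exact sum_congr rfl fun m _ => by ring

lemma tailTerm_sub {b g h : ℕ → ℝ} (hg : Summable fun j => g j * b j)
    (hh : Summable fun j => h j * b j) (n : ℕ) :
    tailTerm b g g n - tailTerm b h h n = tailTerm b g (g - h) n + tailTerm b (g - h) h n := by
  have htail : ∑' j : ℕ, (if n + 1 ≤ j then (g - h) j * b j else 0)
      = ∑' j : ℕ, (if n + 1 ≤ j then g j * b j else 0)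
        - ∑' j : ℕ, (if n + 1 ≤ j then h j * b j else 0) := by
    rw [← (summable_ite_le hg _).tsum_sub (summable_ite_le hh _)]
    exact tsum_congr fun j => by split_ifs <;> simp [sub_mul]
  unfold tailTerm
  rw [htail, Pi.sub_apply]
  ring

section Estimates

variable {b u v : ℕ → ℝ} {U V : ℝ}

lemma sum_abs_memoryTerm_le (hb : Summable fun m : ℕ => (m : ℝ) * |b m|)
    (hu : ∀ m, |u m| ≤ U) (hv : Summable fun n => |deltaOp v n|) (N : ℕ) :
    ∑ n ∈ range N, |memoryTerm b u v (n + 1)| ≤ U * deltaNorm v * ∑' m : ℕ, (m : ℝ) * |b m| := by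
  have hU : 0 ≤ U := (abs_nonneg _).trans (hu 0)
  calc ∑ n ∈ range N, |memoryTerm b u v (n + 1)|
      ≤ ∑ n ∈ range N, ∑ m ∈ Icc 2 (n + 1),
          U * |b m| * ∑ k ∈ Ioc (n + 1 - m) n, |deltaOp v k| := by
        refine sum_le_sum fun n _ => (abs_sum_le_sum_abs _ _).trans (sum_le_sum fun m hm => ?_)
        rw [abs_mul, abs_mul, Nat.add_sub_cancel, ← sum_Ioc_deltaOp v (by simp at hm; omega)]
        gcongr
        exacts [hu m, abs_sum_le_sum_abs _ _]
    _ ≤ (∑' m : ℕ, (m : ℝ) * (U * |b m|)) * deltaNorm v :=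
        sum_window_le (fun m => by positivity) (by simpa only [mul_left_comm] using hb.mul_left U)
          (fun _ => abs_nonneg _) hv N
    _ = U * deltaNorm v * ∑' m : ℕ, (m : ℝ) * |b m| := by
        simp_rw [mul_left_comm _ U, tsum_mul_left]; ring

lemma abs_tailTerm_le (hb : Summable fun m : ℕ => (m : ℝ) * |b m|)
    (hu : ∀ j, |u j| ≤ U) (hv : ∀ j, |v j| ≤ V) (n : ℕ) :
    |tailTerm b u v n| ≤ V * U * ∑' j : ℕ, (if n + 1 ≤ j then |b j| else 0) := by
  have hb' := summable_of_summable_nat_mul (fun _ => abs_nonneg _) hb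
  have htail : |∑' j : ℕ, (if n + 1 ≤ j then u j * b j else 0)|
      ≤ ∑' j : ℕ, U * (if n + 1 ≤ j then |b j| else 0) := by
    rw [← Real.norm_eq_abs]
    refine tsum_of_norm_bounded ((summable_ite_le hb' _).mul_left U).hasSum fun j => ?_
    split_ifs
    · rw [Real.norm_eq_abs, abs_mul]; gcongr; exact hu j
    · simp
  rw [tailTerm, abs_mul, mul_assoc, ← tsum_mul_left]
  exact mul_le_mul (hv _) htail (abs_nonneg _) ((abs_nonneg _).trans (hv 0))

lemma sum_abs_tailTerm_le (hb : Summable fun m : ℕ => (m : ℝ) * |b m|)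
    (hu : ∀ j, |u j| ≤ U) (hv : ∀ j, |v j| ≤ V) (N : ℕ) :
    ∑ n ∈ range N, |tailTerm b u v (n + 1)| ≤ V * U * ∑' m : ℕ, (m : ℝ) * |b m| := by
  have hUV : 0 ≤ V * U := mul_nonneg ((abs_nonneg _).trans (hv 0)) ((abs_nonneg _).trans (hu 0))
  calc ∑ n ∈ range N, |tailTerm b u v (n + 1)|
      ≤ ∑ n ∈ range N, V * U * ∑' j : ℕ, (if n + 1 + 1 ≤ j then |b j| else 0) :=
        sum_le_sum fun n _ => abs_tailTerm_le hb hu hv _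
    _ ≤ V * U * ∑' m : ℕ, (m : ℝ) * |b m| := by
        rw [← mul_sum]
        exact mul_le_mul_of_nonneg_left (sum_range_tsum_tail_le (fun _ => abs_nonneg _) hb N) hUV

end Estimates

theorem tilde_summable_and_deltaNorm_le {b g gt : ℕ → ℝ} {L lam : ℝ}
    (hb : Summable fun m : ℕ => (m : ℝ) * |b m|) (hL : 3 / 2 ≤ L) (hlam0 : 0 ≤ lam)
    (hlam : 6 * (∑' m : ℕ, (m : ℝ) * |b m|) * L * lam ≤ 1)
    (hgS : Summable fun n => |deltaOp g n|) (hgL : deltaNorm g ≤ L) (hgt0 : gt 0 = 1)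
    (hgt : ∀ n, 1 ≤ n → gt n = gt (n - 1) - lam * (memoryTerm b g g n + tailTerm b g g n)) :
    Summable (fun n => |deltaOp gt n|) ∧ deltaNorm gt ≤ L := by
  set β := ∑' m : ℕ, (m : ℝ) * |b m|
  have hβ : 0 ≤ β := tsum_nonneg fun m => by positivity
  have hgb : ∀ n, |g n| ≤ L := fun n => (abs_le_deltaNorm hgS n).trans hgL
  have hF : ∀ N, ∑ n ∈ range N, |memoryTerm b g g (n + 1) + tailTerm b g g (n + 1)|
      ≤ 2 * L * L * β := fun N => by
    have hmem := sum_abs_memoryTerm_le hb hgb hgS N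
    have htail := sum_abs_tailTerm_le hb hgb hgb N
    have hgL' : L * deltaNorm g * β ≤ L * L * β := by gcongr
    calc _ ≤ ∑ n ∈ range N, (|memoryTerm b g g (n + 1)| + |tailTerm b g g (n + 1)|) :=
          sum_le_sum fun n _ => abs_add_le _ _
      _ ≤ 2 * L * L * β := by rw [sum_add_distrib]; linarith
  obtain ⟨hS, hle⟩ := summable_and_deltaNorm_le_of_recurrence hlam0 hgt hF
  refine ⟨hS, hle.trans ?_⟩
  rw [hgt0, abs_one]
  nlinarith [mul_le_mul_of_nonneg_right hlam (by linarith : (0 : ℝ) ≤ L / 3)]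

theorem tilde_sub_summable_and_deltaNorm_le {b g h gt ht : ℕ → ℝ} {L lam : ℝ}
    (hb : Summable fun m : ℕ => (m : ℝ) * |b m|) (hlam0 : 0 ≤ lam)
    (hlam : 6 * (∑' m : ℕ, (m : ℝ) * |b m|) * L * lam ≤ 1)
    (hgS : Summable fun n => |deltaOp g n|) (hgL : deltaNorm g ≤ L)
    (hhS : Summable fun n => |deltaOp h n|) (hhL : deltaNorm h ≤ L) (h0 : gt 0 = ht 0)
    (hgt : ∀ n, 1 ≤ n → gt n = gt (n - 1) - lam * (memoryTerm b g g n + tailTerm b g g n))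
    (hht : ∀ n, 1 ≤ n → ht n = ht (n - 1) - lam * (memoryTerm b h h n + tailTerm b h h n)) :
    Summable (fun n => |deltaOp (gt - ht) n|) ∧
      deltaNorm (gt - ht) ≤ 2 / 3 * deltaNorm (g - h) := by
  set β := ∑' m : ℕ, (m : ℝ) * |b m|
  set D := deltaNorm (g - h)
  have hβ : 0 ≤ β := tsum_nonneg fun m => by positivity
  have hdS := summable_abs_deltaOp_sub hgS hhS
  have hgb : ∀ n, |g n| ≤ L := fun n => (abs_le_deltaNorm hgS n).trans hgL
  have hhb : ∀ n, |h n| ≤ L := fun n => (abs_le_deltaNorm hhS n).trans hhL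
  have hdb : ∀ n, |(g - h) n| ≤ D := abs_le_deltaNorm hdS
  have hL : 0 ≤ L := (abs_nonneg _).trans (hgb 0)
  have hD : 0 ≤ D := (abs_nonneg _).trans (hdb 0)
  have hb' := summable_of_summable_nat_mul (fun _ => abs_nonneg _) hb
  have hmul : ∀ u : ℕ → ℝ, (∀ j, |u j| ≤ L) → Summable fun j => u j * b j := fun u hu =>
    (hb'.mul_left L).of_norm_bounded fun j => by
      rw [Real.norm_eq_abs, abs_mul]; gcongr; exact hu j
  have hrec : ∀ n, 1 ≤ n → (gt - ht) n = (gt - ht) (n - 1) - lam *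
      (memoryTerm b (g - h) g n + memoryTerm b h (g - h) n
        + (tailTerm b g (g - h) n + tailTerm b (g - h) h n)) := fun n hn => by
    rw [← memoryTerm_sub, ← tailTerm_sub (hmul g hgb) (hmul h hhb), Pi.sub_apply, Pi.sub_apply,
      hgt n hn, hht n hn]
    ring
  have hF : ∀ N, ∑ n ∈ range N, |memoryTerm b (g - h) g (n + 1) + memoryTerm b h (g - h) (n + 1)
      + (tailTerm b g (g - h) (n + 1) + tailTerm b (g - h) h (n + 1))| ≤ 4 * L * D * β := by
    intro N
    have hm₁ := sum_abs_memoryTerm_le hb hdb hgS N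
    have hm₂ := sum_abs_memoryTerm_le hb hhb hdS N
    have ht₁ := sum_abs_tailTerm_le hb hgb hdb N
    have ht₂ := sum_abs_tailTerm_le hb hdb hhb N
    have hgL' : D * deltaNorm g * β ≤ D * L * β := by gcongr
    calc _ ≤ ∑ n ∈ range N, (|memoryTerm b (g - h) g (n + 1)| + |memoryTerm b h (g - h) (n + 1)|
          + (|tailTerm b g (g - h) (n + 1)| + |tailTerm b (g - h) h (n + 1)|)) :=
          sum_le_sum fun n _ =>
            (abs_add_le _ _).trans (add_le_add (abs_add_le _ _) (abs_add_le _ _))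
      _ ≤ 4 * L * D * β := by simp only [sum_add_distrib]; linarith
  obtain ⟨hS, hle⟩ := summable_and_deltaNorm_le_of_recurrence hlam0 hrec hF
  refine ⟨hS, hle.trans ?_⟩
  rw [Pi.sub_apply, h0, sub_self, abs_zero, zero_add]
  nlinarith [mul_le_mul_of_nonneg_right hlam (by positivity : (0 : ℝ) ≤ D)]

/-- On `D_L = {g : g_0 = 1, ‖g‖_Δ ≤ L}` with `L ≥ 3/2` and `0 ≤ λ` with `6βLλ ≤ 1`,
the operator `g ↦ g̃` maps `D_L` into `D_L` and is a `2/3`-contraction in `‖·‖_Δ`. -/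
theorem tilde_contraction (b : ℕ → ℝ) (hb : Summable fun m : ℕ => (m : ℝ) * |b m|)
    (L lam : ℝ) (hL : 3 / 2 ≤ L) (hlam0 : 0 ≤ lam)
    (hlam : 6 * (∑' m : ℕ, (m : ℝ) * |b m|) * L * lam ≤ 1)
    (g h gt ht : ℕ → ℝ)
    (hg0 : g 0 = 1) (hgS : Summable fun n => |deltaOp g n|)
    (hgL : (∑' n, |deltaOp g n|) ≤ L)
    (hh0 : h 0 = 1) (hhS : Summable fun n => |deltaOp h n|)
    (hhL : (∑' n, |deltaOp h n|) ≤ L)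
    (hgt0 : gt 0 = g 0)
    (hgtrec : ∀ n, 1 ≤ n → gt n = gt (n - 1) -
      lam * ((∑ m ∈ Finset.Icc 2 n, g m * b m * (g (n - 1) - g (n - m)))
        + g (n - 1) * ∑' j : ℕ, (if n + 1 ≤ j then g j * b j else 0)))
    (hht0 : ht 0 = h 0)
    (hhtrec : ∀ n, 1 ≤ n → ht n = ht (n - 1) -
      lam * ((∑ m ∈ Finset.Icc 2 n, h m * b m * (h (n - 1) - h (n - m)))
        + h (n - 1) * ∑' j : ℕ, (if n + 1 ≤ j then h j * b j else 0))) :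
    (gt 0 = 1 ∧ Summable (fun n => |deltaOp gt n|) ∧ (∑' n, |deltaOp gt n|) ≤ L) ∧
      Summable (fun n => |deltaOp (fun k => gt k - ht k) n|) ∧
      (∑' n, |deltaOp (fun k => gt k - ht k) n|) ≤
        (2 / 3) * ∑' n, |deltaOp (fun k => g k - h k) n| := by
  have hgt1 : gt 0 = 1 := hgt0.trans hg0
  obtain ⟨hgtS, hgtL⟩ :=
    tilde_summable_and_deltaNorm_le hb hL hlam0 hlam hgS hgL hgt1 hgtrec
  obtain ⟨hdS, hdL⟩ := tilde_sub_summable_and_deltaNorm_le hb hlam0 hlam hgS hgL hhS hhL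
    (by rw [hgt1, hht0, hh0]) hgtrec hhtrec
  exact ⟨⟨hgt1, hgtS, hgtL⟩, hdS, hdL⟩
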